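/- The round spherical metric computed as the pullback of the Euclidean metric under the spherical coordinate map is diagonal: the (i,j) entry of (Df)ᵀ(Df) equals δ_{ij} ∏_{k<i} sin²(θ_k), where f : ℝ^D → ℝ^{D+1} is given by f(θ)_d = cos(θ_d)∏_{i<d} sin(θ_i) for d ≤ D and f(θ)_{D+1} = ∏_{i=1}^D sin(θ_i). -/

import Mathlib

open Matrix

/-- The spherical coordinate embedding `f : ℝ^D → ℝ^{D+1}`,
`f(θ)_d = cos(θ_d) ∏_{i<d} sin(θ_i)` for `d ≤ D` and `f(θ)_{D+1} = ∏_{i=1}^D sin(θ_i)`. -/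
noncomputable def sphCoord (D : ℕ) (θ : Fin D → ℝ) (d : Fin (D + 1)) : ℝ :=
  (if h : (d : ℕ) < D then Real.cos (θ ⟨d, h⟩) else 1)
    * ∏ i ∈ Finset.univ.filter (fun i : Fin D => (i : ℕ) < (d : ℕ)), Real.sin (θ i)

/-!
Write `c_k = cos θ_k`, `s_k = sin θ_k` and `P_n = ∏_{k<n} s_k`. Going from dimension `D` to
`D + 1` replaces the last coordinate `P_D` by the pair `(c_D P_D, s_D P_D)`, whose partial
derivatives are `∂_j P_D · (c_D, s_D) + δ_{jD} P_D · (-s_D, c_D)`. The two vectors are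
orthonormal, so the Gram matrix of the partial derivatives gains the single entry `P_D²`
at `(D, D)` and is otherwise unchanged; induction on `D` gives the diagonal.
-/

open Finset

section

variable {ι : Type*} [Fintype ι] {g : ℝ → ℝ} {θ : ι → ℝ}

lemma hasFDerivAt_comp_apply {k : ι} (hg : DifferentiableAt ℝ g (θ k)) :
    HasFDerivAt (fun x : ι → ℝ => g (x k))
      (deriv g (θ k) • ContinuousLinearMap.proj (R := ℝ) (φ := fun _ : ι => ℝ) k) θ :=
  hg.hasDerivAt.comp_hasFDerivAt θ (hasFDerivAt_apply k θ)

lemma fderiv_prod_comp_apply_single [DecidableEq ι] (hg : Differentiable ℝ g) (S : Finset ι)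
    (j : ι) :
    fderiv ℝ (fun x : ι → ℝ => ∏ i ∈ S, g (x i)) θ (Pi.single j 1)
      = if j ∈ S then deriv g (θ j) * ∏ i ∈ S.erase j, g (θ i) else 0 := by
  rw [(HasFDerivAt.finsetProd fun i _ => hasFDerivAt_comp_apply (hg (θ i))).fderiv]
  simp [Pi.single_apply, mul_comm]

end

namespace Fin

variable {D n : ℕ} (hn : n ≤ D)
include hn

lemma map_valEmbedding_filter_val_lt :
    (univ.filter fun i : Fin D => (i : ℕ) < n).map valEmbedding = range n := by
  ext k
  simp only [mem_map, mem_filter, mem_univ, true_and, valEmbedding_apply, mem_range]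
  exact ⟨by rintro ⟨i, hi, rfl⟩; exact hi, fun hk => ⟨⟨k, by omega⟩, hk, rfl⟩⟩

lemma prod_filter_val_lt {M : Type*} [CommMonoid M] (f : ℕ → M) :
    ∏ i ∈ univ.filter (fun i : Fin D => (i : ℕ) < n), f i = ∏ k ∈ range n, f k := by
  rw [← map_valEmbedding_filter_val_lt hn, prod_map]
  rfl

lemma prod_erase_filter_val_lt {M : Type*} [CommMonoid M] (f : ℕ → M) (j : Fin D) :
    ∏ i ∈ (univ.filter fun i : Fin D => (i : ℕ) < n).erase j, f i
      = ∏ k ∈ (range n).erase j, f k := by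
  rw [← map_valEmbedding_filter_val_lt hn, show (j : ℕ) = valEmbedding j from rfl,
    ← map_erase, prod_map]
  rfl

end Fin

namespace SphericalCoordinates

variable (c s : ℕ → ℝ)

/- `prodPartial c s n j` is `∂_j P_n` and `coordPartial c s d j` is `∂_j (c_d P_d)`, where
`∂_j c_k = -δ_{jk} s_k` and `∂_j s_k = δ_{jk} c_k`; `gram c s D` is the Gram matrix of the
partial derivatives of `(c_0 P_0, …, c_{D-1} P_{D-1}, P_D)`. -/

def prodPartial (n j : ℕ) : ℝ :=
  if j < n then c j * ∏ k ∈ (range n).erase j, s k else 0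

def coordPartial (d j : ℕ) : ℝ :=
  c d * prodPartial c s d j - s d * if j = d then ∏ k ∈ range d, s k else 0

def gram (D i j : ℕ) : ℝ :=
  ∑ d ∈ range D, coordPartial c s d i * coordPartial c s d j
    + prodPartial c s D i * prodPartial c s D j

lemma prodPartial_succ (n j : ℕ) :
    prodPartial c s (n + 1) j
      = s n * prodPartial c s n j + c n * if j = n then ∏ k ∈ range n, s k else 0 := by
  unfold prodPartial
  rcases lt_trichotomy j n with hjn | rfl | hnj
  · rw [range_add_one, erase_insert_of_ne (by omega), prod_insert (by simp)]
    simp [hjn, Nat.lt_succ_of_lt hjn, hjn.ne]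
    ring
  · simp [range_add_one]
  · simp [hnj.ne', hnj.not_gt, (Nat.succ_le_of_lt hnj).not_gt]

lemma gram_succ {n : ℕ} (h : c n ^ 2 + s n ^ 2 = 1) (i j : ℕ) :
    gram c s (n + 1) i j = gram c s n i j
      + (if i = n then ∏ k ∈ range n, s k else 0) * if j = n then ∏ k ∈ range n, s k else 0 := by
  unfold gram
  rw [sum_range_succ, prodPartial_succ, prodPartial_succ]
  unfold coordPartial
  linear_combination (prodPartial c s n i * prodPartial c s n j
    + (if i = n then ∏ k ∈ range n, s k else 0) * (if j = n then ∏ k ∈ range n, s k else 0)) * h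

lemma gram_eq_sum (h : ∀ k, c k ^ 2 + s k ^ 2 = 1) (D i j : ℕ) :
    gram c s D i j = ∑ d ∈ range D,
      (if i = d then ∏ k ∈ range d, s k else 0) * if j = d then ∏ k ∈ range d, s k else 0 := by
  induction D with
  | zero => simp [gram, prodPartial]
  | succ n ih => rw [gram_succ c s (h n), ih, sum_range_succ]

lemma gram_eq (h : ∀ k, c k ^ 2 + s k ^ 2 = 1) {D i : ℕ} (hi : i < D) (j : ℕ) :
    gram c s D i j = if i = j then (∏ k ∈ range i, s k) ^ 2 else 0 := by
  rw [gram_eq_sum c s h]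
  rcases eq_or_ne i j with rfl | hij
  · simp [hi, sq]
  · simp [hij]

section

variable {D : ℕ} (θ : Fin D → ℝ)

lemma fderiv_prod_sin_single {n : ℕ} (hn : n ≤ D) (j : Fin D) :
    fderiv ℝ (fun x : Fin D → ℝ => ∏ i ∈ univ.filter (fun i : Fin D => (i : ℕ) < n),
        Real.sin (x i)) θ (Pi.single j 1)
      = prodPartial (Real.cos ∘ Function.extend Fin.val θ 0)
          (Real.sin ∘ Function.extend Fin.val θ 0) n j := by
  rw [fderiv_prod_comp_apply_single Real.differentiable_sin, prodPartial,
    ← Fin.prod_erase_filter_val_lt hn]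
  simp [Fin.val_injective.extend_apply]

lemma fderiv_sphCoord_single (d : Fin (D + 1)) (j : Fin D) :
    fderiv ℝ (fun x => sphCoord D x d) θ (Pi.single j 1)
      = if (d : ℕ) < D then coordPartial (Real.cos ∘ Function.extend Fin.val θ 0)
          (Real.sin ∘ Function.extend Fin.val θ 0) d j
        else prodPartial (Real.cos ∘ Function.extend Fin.val θ 0)
          (Real.sin ∘ Function.extend Fin.val θ 0) D j := by
  have hdD : (d : ℕ) ≤ D := Nat.lt_succ_iff.mp d.isLt
  split_ifs with hd
  · simp only [sphCoord, dif_pos hd]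
    rw [fderiv_fun_mul (by fun_prop) (by fun_prop),
      (hasFDerivAt_comp_apply Real.differentiableAt_cos).fderiv]
    simp only [_root_.add_apply, _root_.smul_apply, ContinuousLinearMap.proj_apply, smul_eq_mul,
      Real.deriv_cos, fderiv_prod_sin_single θ hdD, coordPartial]
    have hext : Function.extend Fin.val θ 0 d = θ ⟨d, hd⟩ :=
      Fin.val_injective.extend_apply θ 0 ⟨d, hd⟩
    rw [← Fin.prod_filter_val_lt hdD]
    simp only [Function.comp_apply, Fin.val_injective.extend_apply, hext, Pi.single_apply,
      Fin.ext_iff, eq_comm (a := (d : ℕ))]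
    split_ifs <;> ring
  · simp only [sphCoord, dif_neg hd, one_mul]
    rw [fderiv_prod_sin_single θ hdD, show (d : ℕ) = D by omega]

lemma sum_fderiv_sphCoord_mul (i j : Fin D) :
    ∑ d : Fin (D + 1), fderiv ℝ (fun x => sphCoord D x d) θ (Pi.single i 1)
        * fderiv ℝ (fun x => sphCoord D x d) θ (Pi.single j 1)
      = gram (Real.cos ∘ Function.extend Fin.val θ 0) (Real.sin ∘ Function.extend Fin.val θ 0)
          D i j := by
  set c := Real.cos ∘ Function.extend Fin.val θ 0
  set s := Real.sin ∘ Function.extend Fin.val θ 0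
  simp only [fderiv_sphCoord_single]
  rw [Fin.sum_univ_eq_sum_range (fun d =>
      (if d < D then coordPartial c s d i else prodPartial c s D i)
        * (if d < D then coordPartial c s d j else prodPartial c s D j)) (D + 1),
    sum_range_succ, if_neg (lt_irrefl D), if_neg (lt_irrefl D), gram]
  congr 1
  exact sum_congr rfl fun d hd => by rw [if_pos (mem_range.mp hd), if_pos (mem_range.mp hd)]

end

end SphericalCoordinates

/-- The round spherical metric, i.e. the pullback `(Df)ᵀ(Df)` of the Euclidean metric
under the spherical coordinate map, is the diagonal matrix
`diag(1, sin²θ_1, ..., ∏_{d<D} sin²θ_d)`. -/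
theorem stmt_15 (D : ℕ) (θ : Fin D → ℝ) :
    (Matrix.of fun (d : Fin (D + 1)) (j : Fin D) =>
        fderiv ℝ (fun x => sphCoord D x d) θ (Pi.single j 1))ᵀ
      * (Matrix.of fun (d : Fin (D + 1)) (j : Fin D) =>
        fderiv ℝ (fun x => sphCoord D x d) θ (Pi.single j 1))
      = Matrix.diagonal (fun i : Fin D =>
          ∏ k ∈ Finset.univ.filter (fun k : Fin D => (k : ℕ) < (i : ℕ)),
            Real.sin (θ k) ^ 2) := by
  ext i j
  rw [mul_apply]
  simp only [transpose_apply, of_apply]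
  rw [SphericalCoordinates.sum_fderiv_sphCoord_mul,
    SphericalCoordinates.gram_eq (Real.cos ∘ _) (Real.sin ∘ _)
      (fun k => Real.cos_sq_add_sin_sq _) i.isLt,
    ← prod_pow, ← Fin.prod_filter_val_lt i.isLt.le]
  simp [diagonal_apply, Fin.val_injective.extend_apply, Fin.val_inj]
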